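/- Let D be a coassociative counital coalgebra over a field k. Then any co-Artinian left D-contramodule is Noetherian. -/

import Mathlib

open TensorProduct LinearMap

section Contra

variable (k : Type) [Field k]
variable (D : Type) [AddCommGroup D] [Module k D] [Coalgebra k D]

/-- Axioms for a left `D`-contramodule structure given by a contraaction map `π`. -/
structure IsContra {P : Type} [AddCommGroup P] [Module k P]
    (π : (D →ₗ[k] P) →ₗ[k] P) : Prop where
  contraassoc : ∀ f : D ⊗[k] D →ₗ[k] P,
    π (f ∘ₗ CoalgebraStruct.comul (R := k) (A := D)) = π (π ∘ₗ TensorProduct.curry f)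
  contraunit : ∀ p : P,
    π ((CoalgebraStruct.counit (R := k) (A := D)).smulRight p) = p

/-- A `k`-linear map between contramodules is a contramodule morphism. -/
def IsContraHom {P Q : Type} [AddCommGroup P] [Module k P] [AddCommGroup Q] [Module k Q]
    (πP : (D →ₗ[k] P) →ₗ[k] P) (πQ : (D →ₗ[k] Q) →ₗ[k] Q) (f : P →ₗ[k] Q) : Prop :=
  ∀ g : D →ₗ[k] P, f (πP g) = πQ (f ∘ₗ g)

/-- The contraaction of the free left contramodule `Hom_k(D, V)`. -/
noncomputable def freeContraaction (V : Type) [AddCommGroup V] [Module k V] :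
    (D →ₗ[k] (D →ₗ[k] V)) →ₗ[k] (D →ₗ[k] V) :=
  (LinearMap.lcomp k V (CoalgebraStruct.comul (R := k) (A := D))) ∘ₗ
    TensorProduct.uncurry (RingHom.id k) D D V

/-- A contramodule is finitely generated if it is a quotient of a free contramodule
with a finite-dimensional space of generators. -/
def FinGenContra {P : Type} [AddCommGroup P] [Module k P]
    (π : (D →ₗ[k] P) →ₗ[k] P) : Prop :=
  ∃ (V : Type) (_ : AddCommGroup V) (_ : Module k V), FiniteDimensional k V ∧
    ∃ g : (D →ₗ[k] V) →ₗ[k] P, Function.Surjective g ∧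
      IsContraHom k D (freeContraaction k D V) π g

end Contra

section ContraSub

variable (k : Type) [Field k]
variable (D : Type) [AddCommGroup D] [Module k D] [Coalgebra k D]
variable {P : Type} [AddCommGroup P] [Module k P]

/-- A subspace `Q ⊆ P` is a subcontramodule if the contraaction takes every map
`D → P` with values in `Q` into `Q`. -/
def IsSubcontra (π : (D →ₗ[k] P) →ₗ[k] P) (Q : Submodule k P) : Prop :=
  ∀ g : D →ₗ[k] P, LinearMap.range g ≤ Q → π g ∈ Q

/-- A contraaction `π'` on a subspace `Q ⊆ P` is compatible with the contraaction `π`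
on `P` if the inclusion `Q → P` is a morphism of contramodules.  For a subcontramodule
`Q` such a compatible contraaction exists and is unique; it is the canonical
contramodule structure of the subcontramodule. -/
def CompatibleSubContraaction (π : (D →ₗ[k] P) →ₗ[k] P) (Q : Submodule k P)
    (π' : (D →ₗ[k] ↥Q) →ₗ[k] ↥Q) : Prop :=
  ∀ g : D →ₗ[k] ↥Q, (π' g : P) = π (Q.subtype ∘ₗ g)

/-- A contramodule is Noetherian if all its subcontramodules are finitely
generated (as contramodules, with their canonical induced structure). -/
def NoetherianContra (π : (D →ₗ[k] P) →ₗ[k] P) : Prop :=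
  ∀ Q : Submodule k P, IsSubcontra k D π Q →
    ∃ π' : (D →ₗ[k] ↥Q) →ₗ[k] ↥Q,
      CompatibleSubContraaction k D π Q π' ∧ FinGenContra k D π'

/-- A contramodule is co-Artinian if every ascending chain of its subcontramodules
terminates. -/
def CoArtinianContra (π : (D →ₗ[k] P) →ₗ[k] P) : Prop :=
  ∀ f : ℕ → Submodule k P, (∀ n, IsSubcontra k D π (f n)) →
    (∀ n, f n ≤ f (n + 1)) → ∃ n, ∀ m, n ≤ m → f m = f n

end ContraSub

/-!
The subcontramodule generated by a subspace `W ⊆ P` is the image of the free contramodule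
`Hom_k(D, W)` under `f ↦ π (ι ∘ f)`, where `ι : W → P` is the inclusion. Inside a
subcontramodule `Q`, the ascending chain condition yields a finite-dimensional `W ⊆ Q` whose
generated subcontramodule is maximal among those; adjoining any `q ∈ Q` to `W` cannot enlarge
it, so it is all of `Q`, which is therefore a quotient of `Hom_k(D, W)`.
-/

namespace Contramodule

variable {k : Type} [Field k] {D : Type} [AddCommGroup D] [Module k D]
variable {P : Type} [AddCommGroup P] [Module k P] (π : (D →ₗ[k] P) →ₗ[k] P)

noncomputable def freeLift {V : Type} [AddCommGroup V] [Module k V] (j : V →ₗ[k] P) :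
    (D →ₗ[k] V) →ₗ[k] P :=
  π ∘ₗ LinearMap.llcomp k D V P j

theorem freeLift_apply {V : Type} [AddCommGroup V] [Module k V] (j : V →ₗ[k] P)
    (f : D →ₗ[k] V) : freeLift π j f = π (j ∘ₗ f) := rfl

noncomputable def contraSpan (W : Submodule k P) : Submodule k P :=
  LinearMap.range (freeLift π W.subtype)

abbrev Subcontra : Type := {Q : Submodule k P // IsSubcontra k D π Q}

variable {π}

theorem isSubcontra_range_of_isContraHom {V : Type} [AddCommGroup V] [Module k V]
    {πV : (D →ₗ[k] V) →ₗ[k] V} {f : V →ₗ[k] P} (hf : IsContraHom k D πV π f) :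
    IsSubcontra k D π (LinearMap.range f) := by
  intro g hg
  obtain ⟨h, hh⟩ := Module.projective_lifting_property f.rangeRestrict
    (g.codRestrict _ fun d => hg ⟨d, rfl⟩) f.surjective_rangeRestrict
  have hfac : f ∘ₗ h = g := by
    ext d
    exact congrArg Subtype.val (LinearMap.congr_fun hh d)
  rw [← hfac, ← hf]
  exact LinearMap.mem_range_self f _

theorem contraSpan_le {Q W : Submodule k P} (hQ : IsSubcontra k D π Q) (hWQ : W ≤ Q) :
    contraSpan π W ≤ Q := by
  rintro _ ⟨f, rfl⟩
  exact hQ _ ((LinearMap.range_comp_le_range f W.subtype).trans (by simpa using hWQ))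

theorem wellFoundedGT_subcontra (hca : CoArtinianContra k D π) :
    WellFoundedGT (Subcontra π) := by
  refine wellFoundedGT_iff_monotone_chain_condition.2 fun a => ?_
  obtain ⟨n, hn⟩ := hca (fun n => (a n).1) (fun n => (a n).2)
    (fun n => a.monotone n.le_succ)
  exact ⟨n, fun m hm => Subtype.ext (hn m hm).symm⟩

noncomputable def subContraaction {Q : Submodule k P} (hQ : IsSubcontra k D π Q) :
    (D →ₗ[k] Q) →ₗ[k] Q :=
  LinearMap.codRestrict Q (π ∘ₗ LinearMap.llcomp k D Q P Q.subtype) fun g =>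
    hQ _ ((LinearMap.range_comp_le_range g Q.subtype).trans (by simp))

theorem compatible_subContraaction {Q : Submodule k P} (hQ : IsSubcontra k D π Q) :
    CompatibleSubContraaction k D π Q (subContraaction hQ) :=
  fun _ => rfl

variable [Coalgebra k D]

theorem freeLift_isContraHom (hP : IsContra k D π) {V : Type} [AddCommGroup V]
    [Module k V] (j : V →ₗ[k] P) :
    IsContraHom k D (freeContraaction k D V) π (freeLift π j) := by
  intro f
  have hassoc : j ∘ₗ freeContraaction k D V f =
      (j ∘ₗ TensorProduct.uncurry (RingHom.id k) D D V f) ∘ₗ CoalgebraStruct.comul := by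
    ext; rfl
  rw [freeLift_apply, hassoc, hP.contraassoc]
  rfl

theorem freeLift_counit_smulRight (hP : IsContra k D π) {V : Type} [AddCommGroup V]
    [Module k V] (j : V →ₗ[k] P) (v : V) :
    freeLift π j (CoalgebraStruct.counit.smulRight v) = j v := by
  have hj : j ∘ₗ CoalgebraStruct.counit.smulRight v =
      (CoalgebraStruct.counit (R := k) (A := D)).smulRight (j v) := by
    ext; simp
  rw [freeLift_apply, hj, hP.contraunit]

theorem isSubcontra_contraSpan (hP : IsContra k D π) (W : Submodule k P) :
    IsSubcontra k D π (contraSpan π W) :=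
  isSubcontra_range_of_isContraHom (freeLift_isContraHom hP W.subtype)

theorem le_contraSpan (hP : IsContra k D π) (W : Submodule k P) : W ≤ contraSpan π W :=
  fun w hw => ⟨_, freeLift_counit_smulRight hP W.subtype ⟨w, hw⟩⟩

theorem contraSpan_mono (hP : IsContra k D π) {W W' : Submodule k P} (h : W ≤ W') :
    contraSpan π W ≤ contraSpan π W' :=
  contraSpan_le (isSubcontra_contraSpan hP W') (h.trans (le_contraSpan hP W'))

theorem exists_finiteDimensional_contraSpan_eq (hP : IsContra k D π)
    (hca : CoArtinianContra k D π) {Q : Submodule k P} (hQ : IsSubcontra k D π Q) :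
    ∃ W : Submodule k P, FiniteDimensional k W ∧ contraSpan π W = Q := by
  let span (W : {W : Submodule k P // W ≤ Q ∧ FiniteDimensional k W}) : Subcontra π :=
    ⟨contraSpan π W.1, isSubcontra_contraSpan hP W.1⟩
  have hwf := InvImage.wf span (wellFoundedGT_subcontra hca).wf
  obtain ⟨⟨W, hWQ, hW⟩, -, hmax⟩ :=
    hwf.has_min Set.univ ⟨⟨⊥, bot_le, inferInstance⟩, trivial⟩
  refine ⟨W, hW, (contraSpan_le hQ hWQ).antisymm fun q hq => ?_⟩
  by_contra hqW
  let W' := W ⊔ Submodule.span k {q}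
  have hW'Q : W' ≤ Q := sup_le hWQ ((Submodule.span_singleton_le_iff_mem q Q).2 hq)
  refine hmax ⟨W', hW'Q, inferInstance⟩ trivial (lt_of_le_not_ge ?_ fun hle => hqW (hle ?_))
  · exact contraSpan_mono hP le_sup_left
  · exact le_contraSpan hP W' (Submodule.mem_sup_right (Submodule.mem_span_singleton_self q))

theorem finGenContra_subContraaction_of_contraSpan_eq (hP : IsContra k D π)
    {Q W : Submodule k P} (hQ : IsSubcontra k D π Q) [FiniteDimensional k W]
    (hWQ : contraSpan π W = Q) : FinGenContra k D (subContraaction hQ) := by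
  have hmem (f : D →ₗ[k] W) : freeLift π W.subtype f ∈ Q :=
    hWQ ▸ LinearMap.mem_range_self _ f
  refine ⟨W, inferInstance, inferInstance, inferInstance,
    (freeLift π W.subtype).codRestrict Q hmem, ?_, fun f => Subtype.ext ?_⟩
  · rintro ⟨q, hq⟩
    obtain ⟨f, hf⟩ := (hWQ ▸ hq : q ∈ contraSpan π W)
    exact ⟨f, Subtype.ext hf⟩
  · exact freeLift_isContraHom hP W.subtype f

end Contramodule

/-- Lemma 1.6(a): any co-Artinian left `D`-contramodule is Noetherian. -/
theorem coArtinian_contramodule_noetherian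
    (k : Type) [Field k]
    (D : Type) [AddCommGroup D] [Module k D] [Coalgebra k D]
    (P : Type) [AddCommGroup P] [Module k P]
    (π : (D →ₗ[k] P) →ₗ[k] P) (hP : IsContra k D π)
    (hca : CoArtinianContra k D π) :
    NoetherianContra k D π := by
  intro Q hQ
  obtain ⟨W, hW, hWQ⟩ := Contramodule.exists_finiteDimensional_contraSpan_eq hP hca hQ
  exact ⟨Contramodule.subContraaction hQ, Contramodule.compatible_subContraaction hQ,
    Contramodule.finGenContra_subContraaction_of_contraSpan_eq hP hQ hWQ⟩
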